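/- Let n ≥ 2 and let h be an n×n real symmetric matrix satisfying h i j = 0 whenever i ≠ j and both i, j lie among the first n−1 indices, and h i i > 0 for every i among the first n−1 indices. Assume h n n = Σ_{i<n} (h i n)² / h i i. Then the minimum of the quadratic form ξ ↦ Σ_{i,j} h i j · ξ i · ξ j over the unit sphere {ξ ∈ ℝⁿ : |ξ| = 1} equals 0, and it is attained precisely at the two unit vectors ± v/|v|, where v is the vector with v i = −(h i n)/(h i i) for i < n and v n = 1. -/

import Mathlib

/-!
Split off the last index `p` and complete the square: when `h p p = ∑_{i ≠ p} h i p ^ 2 / h i i`,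
the quadratic form equals `∑_{i ≠ p} h i i * (ξ i + h i p / h i i * ξ p) ^ 2`. With `h i i > 0`
this is a sum of nonnegative terms, so the form is nonnegative and vanishes exactly when
`ξ i = ξ p * v i` for every `i`, i.e. on the line spanned by `v`. That line meets the unit sphere
in `± v / |v|`.
-/

open Finset

section UnitSphere

variable {ι : Type*} [Fintype ι]

theorem sum_sq_smul (t : ℝ) (v : ι → ℝ) : ∑ i, (t • v) i ^ 2 = t ^ 2 * ∑ i, v i ^ 2 := by
  simp only [Pi.smul_apply, smul_eq_mul, mul_pow, mul_sum]

theorem sum_sq_inv_sqrt_smul_self {v : ι → ℝ} (hv : ∑ i, v i ^ 2 ≠ 0) :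
    ∑ i, ((Real.sqrt (∑ i, v i ^ 2))⁻¹ • v) i ^ 2 = 1 := by
  rw [sum_sq_smul, inv_pow, Real.sq_sqrt (sum_nonneg fun i _ => sq_nonneg _), inv_mul_cancel₀ hv]

theorem smul_eq_or_eq_neg_of_sum_sq_eq_one {v : ι → ℝ} {t : ℝ}
    (ht : ∑ i, (t • v) i ^ 2 = 1) :
    t • v = (Real.sqrt (∑ i, v i ^ 2))⁻¹ • v ∨ t • v = -((Real.sqrt (∑ i, v i ^ 2))⁻¹ • v) := by
  rw [sum_sq_smul] at ht
  have hsq : t ^ 2 = (Real.sqrt (∑ i, v i ^ 2))⁻¹ ^ 2 := by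
    rw [inv_pow, Real.sq_sqrt (sum_nonneg fun i _ => sq_nonneg _), eq_inv_of_mul_eq_one_left ht]
  rcases sq_eq_sq_iff_eq_or_eq_neg.1 hsq with rfl | rfl
  · exact Or.inl rfl
  · exact Or.inr (neg_smul _ _)

end UnitSphere

section Arrowhead

variable {ι : Type*} [Fintype ι] [DecidableEq ι] {h : Matrix ι ι ℝ} {p : ι}

theorem arrowhead_quadForm_eq (hsymm : ∀ i j, h i j = h j i)
    (harrow : ∀ i j, i ≠ j → i ≠ p → j ≠ p → h i j = 0) (ξ : ι → ℝ) :
    ∑ i, ∑ j, h i j * ξ i * ξ j =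
      h p p * ξ p ^ 2 + ∑ i ∈ univ.erase p, (2 * h i p * ξ i * ξ p + h i i * ξ i ^ 2) := by
  have row : ∀ i ∈ univ.erase p,
      ∑ j, h i j * ξ i * ξ j = h i p * ξ i * ξ p + h i i * ξ i ^ 2 := by
    intro i hi
    rw [← add_sum_erase _ _ (mem_univ p), sum_eq_single_of_mem i hi]
    · ring
    · intro j hj hji
      rw [harrow i j (Ne.symm hji) (ne_of_mem_erase hi) (ne_of_mem_erase hj)]
      ring
  rw [← add_sum_erase _ _ (mem_univ p), sum_congr rfl row, ← add_sum_erase _ _ (mem_univ p),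
    add_assoc, ← sum_add_distrib]
  congr 1
  · ring
  · exact sum_congr rfl fun i _ => by rw [hsymm p i]; ring

theorem arrowhead_quadForm_eq_sum_sq (hsymm : ∀ i j, h i j = h j i)
    (harrow : ∀ i j, i ≠ j → i ≠ p → j ≠ p → h i j = 0) (hdiag : ∀ i ≠ p, h i i ≠ 0)
    (hpp : h p p = ∑ i ∈ univ.erase p, h i p ^ 2 / h i i) (ξ : ι → ℝ) :
    ∑ i, ∑ j, h i j * ξ i * ξ j =
      ∑ i ∈ univ.erase p, h i i * (ξ i + h i p / h i i * ξ p) ^ 2 := by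
  rw [arrowhead_quadForm_eq hsymm harrow, hpp, sum_mul, ← sum_add_distrib]
  refine sum_congr rfl fun i hi => ?_
  have := hdiag i (ne_of_mem_erase hi)
  field_simp
  ring

theorem arrowhead_quadForm_nonneg (hsymm : ∀ i j, h i j = h j i)
    (harrow : ∀ i j, i ≠ j → i ≠ p → j ≠ p → h i j = 0) (hpos : ∀ i ≠ p, 0 < h i i)
    (hpp : h p p = ∑ i ∈ univ.erase p, h i p ^ 2 / h i i) (ξ : ι → ℝ) :
    0 ≤ ∑ i, ∑ j, h i j * ξ i * ξ j := by
  rw [arrowhead_quadForm_eq_sum_sq hsymm harrow (fun i hi => (hpos i hi).ne') hpp]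
  exact sum_nonneg fun i hi => mul_nonneg (hpos i (ne_of_mem_erase hi)).le (sq_nonneg _)

theorem arrowhead_quadForm_eq_zero_iff (hsymm : ∀ i j, h i j = h j i)
    (harrow : ∀ i j, i ≠ j → i ≠ p → j ≠ p → h i j = 0) (hpos : ∀ i ≠ p, 0 < h i i)
    (hpp : h p p = ∑ i ∈ univ.erase p, h i p ^ 2 / h i i) {v : ι → ℝ} (hvp : v p = 1)
    (hv : ∀ i ≠ p, v i = -h i p / h i i) (ξ : ι → ℝ) :
    ∑ i, ∑ j, h i j * ξ i * ξ j = 0 ↔ ∃ t : ℝ, ξ = t • v := by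
  have hdiag : ∀ i ≠ p, h i i ≠ 0 := fun i hi => (hpos i hi).ne'
  rw [arrowhead_quadForm_eq_sum_sq hsymm harrow hdiag hpp, sum_eq_zero_iff_of_nonneg
    fun i hi => mul_nonneg (hpos i (ne_of_mem_erase hi)).le (sq_nonneg _)]
  have term : ∀ i ≠ p, h i i * (ξ i + h i p / h i i * ξ p) ^ 2 = 0 ↔ ξ i = ξ p * v i := by
    intro i hi
    rw [mul_eq_zero, or_iff_right (hdiag i hi), pow_eq_zero_iff two_ne_zero, hv i hi,
      add_eq_zero_iff_eq_neg, neg_div, mul_neg, mul_comm (ξ p)]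
  constructor
  · intro hzero
    refine ⟨ξ p, funext fun i => ?_⟩
    by_cases hi : i = p
    · simp [hi, hvp]
    · exact (term i hi).1 (hzero i (mem_erase.2 ⟨hi, mem_univ i⟩))
  · rintro ⟨t, rfl⟩ i hi
    exact (term i (ne_of_mem_erase hi)).2 (by simp [hvp])

theorem arrowhead_quadForm_eq_zero_iff_of_sum_sq_eq_one (hsymm : ∀ i j, h i j = h j i)
    (harrow : ∀ i j, i ≠ j → i ≠ p → j ≠ p → h i j = 0) (hpos : ∀ i ≠ p, 0 < h i i)
    (hpp : h p p = ∑ i ∈ univ.erase p, h i p ^ 2 / h i i) {v : ι → ℝ} (hvp : v p = 1)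
    (hv : ∀ i ≠ p, v i = -h i p / h i i) {ξ : ι → ℝ} (hξ : ∑ i, ξ i ^ 2 = 1) :
    ∑ i, ∑ j, h i j * ξ i * ξ j = 0 ↔
      ξ = (Real.sqrt (∑ i, v i ^ 2))⁻¹ • v ∨ ξ = -((Real.sqrt (∑ i, v i ^ 2))⁻¹ • v) := by
  rw [arrowhead_quadForm_eq_zero_iff hsymm harrow hpos hpp hvp hv]
  constructor
  · rintro ⟨t, rfl⟩
    exact smul_eq_or_eq_neg_of_sum_sq_eq_one hξ
  · rintro (rfl | rfl)
    · exact ⟨_, rfl⟩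
    · exact ⟨_, (neg_smul _ _).symm⟩

theorem arrowhead_quadForm_isLeast_on_unit_sphere (hsymm : ∀ i j, h i j = h j i)
    (harrow : ∀ i j, i ≠ j → i ≠ p → j ≠ p → h i j = 0) (hpos : ∀ i ≠ p, 0 < h i i)
    (hpp : h p p = ∑ i ∈ univ.erase p, h i p ^ 2 / h i i) {v : ι → ℝ} (hvp : v p = 1)
    (hv : ∀ i ≠ p, v i = -h i p / h i i) :
    IsLeast {r : ℝ | ∃ ξ : ι → ℝ, ∑ i, ξ i ^ 2 = 1 ∧ ∑ i, ∑ j, h i j * ξ i * ξ j = r} 0 ∧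
    ∀ ξ : ι → ℝ, ∑ i, ξ i ^ 2 = 1 → (∑ i, ∑ j, h i j * ξ i * ξ j = 0 ↔
      ξ = (Real.sqrt (∑ i, v i ^ 2))⁻¹ • v ∨ ξ = -((Real.sqrt (∑ i, v i ^ 2))⁻¹ • v)) := by
  have hzero {ξ : ι → ℝ} (hξ : ∑ i, ξ i ^ 2 = 1) :=
    arrowhead_quadForm_eq_zero_iff_of_sum_sq_eq_one hsymm harrow hpos hpp hvp hv hξ
  have hv_sq : ∑ i, v i ^ 2 ≠ 0 := by
    refine (one_pos.trans_le ?_).ne'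
    simpa [hvp] using single_le_sum (fun i _ => sq_nonneg (v i)) (mem_univ p)
  have hu := sum_sq_inv_sqrt_smul_self hv_sq
  refine ⟨⟨⟨_, hu, (hzero hu).2 (Or.inl rfl)⟩, ?_⟩, fun ξ hξ => hzero hξ⟩
  rintro r ⟨ξ, -, rfl⟩
  exact arrowhead_quadForm_nonneg hsymm harrow hpos hpp ξ

end Arrowhead


/-- The minimum of the quadratic form of a singular "arrowhead" symmetric matrix
over the unit sphere is `0`, attained precisely at the two unit vectors
`± v / |v|`. -/
theorem stmt_4 (n : ℕ) (hn : 2 ≤ n) (h : Matrix (Fin n) (Fin n) ℝ)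
    (hsymm : ∀ i j : Fin n, h i j = h j i)
    (hdiag : ∀ i j : Fin n, i ≠ j → (i : ℕ) < n - 1 → (j : ℕ) < n - 1 → h i j = 0)
    (hpos : ∀ i : Fin n, (i : ℕ) < n - 1 → 0 < h i i)
    (hnn : h ⟨n - 1, by omega⟩ ⟨n - 1, by omega⟩ =
      ∑ i ∈ Finset.univ.filter (fun i : Fin n => (i : ℕ) < n - 1),
        (h i ⟨n - 1, by omega⟩) ^ 2 / h i i) :
    let v : Fin n → ℝ := fun i =>
      if (i : ℕ) < n - 1 then -(h i ⟨n - 1, by omega⟩) / h i i else 1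
    let u : Fin n → ℝ := (Real.sqrt (∑ i : Fin n, (v i) ^ 2))⁻¹ • v
    IsLeast {r : ℝ | ∃ ξ : Fin n → ℝ, ∑ i : Fin n, (ξ i) ^ 2 = 1 ∧
        ∑ i : Fin n, ∑ j : Fin n, h i j * ξ i * ξ j = r} 0 ∧
    (∀ ξ : Fin n → ℝ, ∑ i : Fin n, (ξ i) ^ 2 = 1 →
      (∑ i : Fin n, ∑ j : Fin n, h i j * ξ i * ξ j = 0 ↔ ξ = u ∨ ξ = -u)) := by
  intro v u
  set N : Fin n := ⟨n - 1, by omega⟩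
  have hlt : ∀ i : Fin n, (i : ℕ) < n - 1 ↔ i ≠ N := fun i => by
    simp only [N, Ne, Fin.ext_iff]
    omega
  have harrow : ∀ i j, i ≠ j → i ≠ N → j ≠ N → h i j = 0 := fun i j hij hi hj =>
    hdiag i j hij ((hlt i).2 hi) ((hlt j).2 hj)
  have hpos' : ∀ i ≠ N, 0 < h i i := fun i hi => hpos i ((hlt i).2 hi)
  have hpp : h N N = ∑ i ∈ univ.erase N, h i N ^ 2 / h i i := by
    rw [hnn]
    congr 1
    ext i
    simp [hlt]
  have hvN : v N = 1 := if_neg (by simp [N])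
  have hv : ∀ i ≠ N, v i = -h i N / h i i := fun i hi => if_pos ((hlt i).2 hi)
  exact arrowhead_quadForm_isLeast_on_unit_sphere hsymm harrow hpos' hpp hvN hv
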